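/- arXiv:2101.03910 — 2 statements merged into one kernel-verified Lean document; each statement's English description precedes it below -/
import Mathlib

section
/- Let K̂_n(x) = max(0, 1 − |x|/(n+1)) for x ∈ ℝ (the Fourier transform of the Fejér kernel). If (n_k) is lacunary with ratio α > 1, then for every x ∈ ℝ and every N ∈ ℕ, ∑_{k=1}^{N} |K̂_{n_{k+1}}(x) − K̂_{n_k}(x)| ≤ 2α/(α−1). -/
/-!
Since `α ≥ 1`, a lacunary sequence is nondecreasing, and `fejerSymbol m x` is nondecreasing in `m`
with values in `[0, 1]`. Hence all differences have the same sign, the sum telescopes to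
`K̂_{n_{N+1}}(x) - K̂_{n_1}(x) ≤ 1`, and `1 ≤ 2α/(α-1)`.
-/

/-- Fourier transform of the Fejér kernel. -/
noncomputable def fejerSymbol (n : ℕ) (x : ℝ) : ℝ := max 0 (1 - |x| / (n + 1))

open Finset

theorem Monotone.sum_Icc_abs_sub_eq {G : Type*} [AddCommGroup G] [LinearOrder G]
    [IsOrderedAddMonoid G] {f : ℕ → G} (hf : Monotone f) (N : ℕ) :
    ∑ k ∈ Icc 1 N, |f (k + 1) - f k| = f (N + 1) - f 1 := by
  have hdiff : ∀ k, |f (k + 1) - f k| = f (k + 1) - f k :=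
    fun k ↦ abs_of_nonneg (sub_nonneg.mpr (hf k.le_succ))
  simp_rw [hdiff]
  rcases N with _ | N
  · simp
  · exact sum_Icc_sub (by omega) f

theorem monotone_of_lacunary {n : ℕ → ℕ} (hn : ∀ k, 0 < n k) {α : ℝ} (hα : 1 ≤ α)
    (hlac : ∀ k, α ≤ (n (k + 1) : ℝ) / n k) : Monotone n := by
  refine monotone_nat_of_le_succ fun k ↦ ?_
  have hpos : (0 : ℝ) < n k := by exact_mod_cast hn k
  have hratio : (1 : ℝ) ≤ (n (k + 1) : ℝ) / n k := hα.trans (hlac k)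
  exact_mod_cast (one_le_div hpos).mp hratio

theorem monotone_fejerSymbol (x : ℝ) : Monotone fun m ↦ fejerSymbol m x := by
  intro m m' h
  simp only [fejerSymbol]
  gcongr

theorem fejerSymbol_nonneg (m : ℕ) (x : ℝ) : 0 ≤ fejerSymbol m x := le_max_left _ _

theorem fejerSymbol_le_one (m : ℕ) (x : ℝ) : fejerSymbol m x ≤ 1 :=
  max_le zero_le_one (sub_le_self _ (by positivity))

theorem stmt_2 (n : ℕ → ℕ) (hn : ∀ k, 0 < n k) (α : ℝ) (hα : 1 < α)
    (hlac : ∀ k, α ≤ (n (k + 1) : ℝ) / (n k : ℝ)) :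
    ∀ (x : ℝ) (N : ℕ),
      ∑ k ∈ Finset.Icc 1 N, |fejerSymbol (n (k + 1)) x - fejerSymbol (n k) x|
        ≤ 2 * α / (α - 1) := by
  intro x N
  have hmono : Monotone fun k ↦ fejerSymbol (n k) x :=
    (monotone_fejerSymbol x).comp (monotone_of_lacunary hn hα.le hlac)
  rw [hmono.sum_Icc_abs_sub_eq N]
  calc fejerSymbol (n (N + 1)) x - fejerSymbol (n 1) x ≤ 1 := by
        linarith [fejerSymbol_le_one (n (N + 1)) x, fejerSymbol_nonneg (n 1) x]
    _ ≤ 2 * α / (α - 1) := by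
        rw [le_div_iff₀ (by linarith)]
        linarith
end

section
/- Let H be a Hilbert space and (y_k) a sequence in H such that there is a constant C with ‖∑_{k=1}^{N} c_k y_k‖ ≤ C sup_k |c_k| for every bounded scalar sequence (c_k) and every N. Then the series ∑_{k=1}^{∞} y_k converges unconditionally in H. -/
/-!
If the partial sums of `∑ ε k • y k` were not Cauchy, there would be consecutive blocks
`u j` of the series with `‖u j‖ ≥ δ > 0`. By the parallelogram law, signs `η j` can be chosen
one block at a time so that `‖∑_{j<J} η j • u j‖² ≥ ∑_{j<J} ‖u j‖² ≥ J δ²`. But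
`∑_{j<J} η j • u j` is a sum `∑ c k • y k` with `|c k| ≤ 1`, hence has norm at most `C`,
which is absurd for `J > C² / δ²`.
-/

open Finset

lemma exists_strictMono_le_dist_of_not_cauchySeq {α : Type*} [PseudoMetricSpace α] {S : ℕ → α}
    (hS : ¬CauchySeq S) :
    ∃ δ > 0, ∃ n : ℕ → ℕ, StrictMono n ∧ ∀ j, δ ≤ dist (S (n (j + 1))) (S (n j)) := by
  rw [Metric.cauchySeq_iff'] at hS
  push Not at hS
  obtain ⟨δ, hδ, hfar⟩ := hS
  have hnext : ∀ N, ∃ m, N < m ∧ δ ≤ dist (S m) (S N) := fun N => by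
    obtain ⟨m, hm, hd⟩ := hfar N
    refine ⟨m, hm.lt_of_ne ?_, hd⟩
    rintro rfl
    rw [dist_self] at hd
    exact hd.not_gt hδ
  choose g hg hgd using hnext
  refine ⟨δ, hδ, fun j => g^[j] 0, strictMono_nat_of_lt_succ fun j => ?_, fun j => ?_⟩
  · simpa only [Function.iterate_succ_apply'] using hg _
  · simpa only [Function.iterate_succ_apply'] using hgd _

section InnerProductSpace

variable {E : Type*} [NormedAddCommGroup E] [InnerProductSpace ℝ E]

lemma exists_abs_eq_one_norm_sq_add_le (s v : E) :
    ∃ σ : ℝ, |σ| = 1 ∧ ‖s‖ ^ 2 + ‖v‖ ^ 2 ≤ ‖s + σ • v‖ ^ 2 := by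
  have hpar := parallelogram_law_with_norm ℝ s v
  rcases le_total (‖s - v‖ ^ 2) (‖s + v‖ ^ 2) with h | h
  · exact ⟨1, abs_one, by rw [one_smul]; linarith⟩
  · exact ⟨-1, by simp, by rw [neg_one_smul, ← sub_eq_add_neg]; linarith⟩

lemma exists_signs_sum_norm_sq_le (u : ℕ → E) (J : ℕ) :
    ∃ η : ℕ → ℝ, (∀ j, |η j| = 1) ∧
      ∑ j ∈ range J, ‖u j‖ ^ 2 ≤ ‖∑ j ∈ range J, η j • u j‖ ^ 2 := by
  induction J with
  | zero => exact ⟨1, fun _ => abs_one, by simp⟩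
  | succ J ih =>
    obtain ⟨η, hη, hsq⟩ := ih
    obtain ⟨σ, hσ, hstep⟩ := exists_abs_eq_one_norm_sq_add_le (∑ j ∈ range J, η j • u j) (u J)
    refine ⟨Function.update η J σ, fun j => ?_, ?_⟩
    · rcases eq_or_ne j J with rfl | hj
      · rwa [Function.update_self]
      · rw [Function.update_of_ne hj]
        exact hη j
    · have hprefix : ∑ j ∈ range J, Function.update η J σ j • u j
          = ∑ j ∈ range J, η j • u j :=
        sum_congr rfl fun j hj => by rw [Function.update_of_ne (mem_range.1 hj).ne]
      rw [sum_range_succ, sum_range_succ, hprefix, Function.update_self]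
      linarith

end InnerProductSpace

lemma exists_sum_range_smul_eq_sum_smul_blocks {E : Type*} [AddCommGroup E] [Module ℝ E]
    (y : ℕ → E) {n : ℕ → ℕ} (hn : Monotone n) (η : ℕ → ℝ) (hη : ∀ j, |η j| ≤ 1) (J : ℕ) :
    ∃ c : ℕ → ℝ, (∀ k, |c k| ≤ 1) ∧
      ∑ j ∈ range J, η j • ∑ k ∈ Ico (n j) (n (j + 1)), y k
        = ∑ k ∈ range (n J), c k • y k := by
  induction J with
  | zero => exact ⟨0, fun _ => by simp, by simp⟩
  | succ J ih =>
    obtain ⟨c, hc, hsum⟩ := ih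
    refine ⟨fun k => if k < n J then c k else η J, fun k => ?_, ?_⟩
    · dsimp only
      split_ifs
      exacts [hc k, hη J]
    · have hprefix : ∑ k ∈ range (n J), (if k < n J then c k else η J) • y k
          = ∑ k ∈ range (n J), c k • y k :=
        sum_congr rfl fun k hk => by rw [if_pos (mem_range.1 hk)]
      have hblock : ∑ k ∈ Ico (n J) (n (J + 1)), (if k < n J then c k else η J) • y k
          = η J • ∑ k ∈ Ico (n J) (n (J + 1)), y k := by
        rw [smul_sum]
        exact sum_congr rfl fun k hk => by rw [if_neg (mem_Ico.1 hk).1.not_gt]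
      rw [sum_range_succ, hsum, ← sum_range_add_sum_Ico _ (hn J.le_succ), hprefix, hblock]

theorem cauchySeq_sum_range_of_norm_sum_smul_le {H : Type*} [NormedAddCommGroup H]
    [InnerProductSpace ℝ H] (y : ℕ → H) (C : ℝ)
    (hC : ∀ c : ℕ → ℝ, (∀ k, |c k| ≤ 1) → ∀ N, ‖∑ k ∈ range N, c k • y k‖ ≤ C) :
    CauchySeq fun N => ∑ k ∈ range N, y k := by
  by_contra hS
  obtain ⟨δ, hδ, n, hn, hfar⟩ := exists_strictMono_le_dist_of_not_cauchySeq hS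
  set u : ℕ → H := fun j => ∑ k ∈ Ico (n j) (n (j + 1)), y k
  have hu : ∀ j, δ ≤ ‖u j‖ := fun j => by
    simpa only [u, sum_Ico_eq_sub _ (hn.monotone j.le_succ), ← dist_eq_norm] using hfar j
  have hJ : ∀ J : ℕ, J * δ ^ 2 ≤ C ^ 2 := fun J => by
    obtain ⟨η, hη, hsq⟩ := exists_signs_sum_norm_sq_le u J
    obtain ⟨c, hc, hsum⟩ :=
      exists_sum_range_smul_eq_sum_smul_blocks y hn.monotone η (fun j => (hη j).le) J
    calc (J : ℝ) * δ ^ 2 = ∑ _j ∈ range J, δ ^ 2 := by simp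
      _ ≤ ∑ j ∈ range J, ‖u j‖ ^ 2 :=
        sum_le_sum fun j _ => pow_le_pow_left₀ hδ.le (hu j) 2
      _ ≤ ‖∑ j ∈ range J, η j • u j‖ ^ 2 := hsq
      _ ≤ C ^ 2 := by
        rw [hsum]
        exact pow_le_pow_left₀ (norm_nonneg _) (hC c hc _) 2
  obtain ⟨J, hJC⟩ := exists_nat_gt (C ^ 2 / δ ^ 2)
  rw [div_lt_iff₀ (by positivity)] at hJC
  linarith [hJ J]

theorem stmt_11 {H : Type*} [NormedAddCommGroup H] [InnerProductSpace ℝ H] [CompleteSpace H]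
    (y : ℕ → H) (C : ℝ)
    (hC : ∀ c : ℕ → ℝ, (∃ M, ∀ k, |c k| ≤ M) →
      ∀ N : ℕ, ‖∑ k ∈ Finset.range N, c k • y k‖ ≤ C * (⨆ k, |c k|)) :
    ∀ ε : ℕ → ℝ, (∀ k, ε k = 1 ∨ ε k = -1) →
      ∃ s : H, Filter.Tendsto (fun N => ∑ k ∈ Finset.range N, ε k • y k)
        Filter.atTop (nhds s) := by
  intro ε hε
  have hC0 : 0 ≤ C := by simpa using hC 1 ⟨1, by simp⟩ 0
  refine cauchySeq_tendsto_of_complete <|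
    cauchySeq_sum_range_of_norm_sum_smul_le _ C fun c hc N => ?_
  have hcε : ∀ k, |c k * ε k| ≤ 1 := fun k => by
    rcases hε k with h | h <;> simpa [h] using hc k
  calc ‖∑ k ∈ range N, c k • ε k • y k‖ = ‖∑ k ∈ range N, (c k * ε k) • y k‖ := by
        simp only [smul_smul]
    _ ≤ C * ⨆ k, |c k * ε k| := hC _ ⟨1, hcε⟩ N
    _ ≤ C := mul_le_of_le_one_right hC0 (Real.iSup_le hcε zero_le_one)
end
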